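/- arXiv:2011.11364 — 2 statements merged into one kernel-verified Lean document; each statement's English description precedes it below -/
import Mathlib

section
/- Let M_1, …, M_N be POVMs on ℂ^d, where M_i has outcome set Fin n_i. If M_1, …, M_N are jointly measurable, then there exist an ancilla dimension d_A, a density matrix σ on ℂ^{d_A}, and PVMs P_1, …, P_N on ℂ^d ⊗ ℂ^{d_A} (P_i with outcome set Fin n_i) that pairwise commute (P_i(a) * P_l(b) = P_l(b) * P_i(a) for all i, l, a, b) and such that each P_i is a Naimark extension of M_i with the same ancilla state σ. -/
open Matrix ComplexOrder Kronecker

/-- A POVM with finite outcome set `J`. -/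
def IsPOVM {ι : Type} [Fintype ι] [DecidableEq ι] {J : Type} [Fintype J]
    (E : J → Matrix ι ι ℂ) : Prop :=
  (∀ j, (E j).PosSemidef) ∧ ∑ j, E j = 1

/-- A PVM: a POVM all of whose effects are orthogonal projections. -/
def IsPVM {ι : Type} [Fintype ι] [DecidableEq ι] {J : Type} [Fintype J]
    (E : J → Matrix ι ι ℂ) : Prop :=
  IsPOVM E ∧ ∀ j, (E j).IsHermitian ∧ E j * E j = E j

/-- A density matrix: positive semidefinite with trace 1. -/
def IsDensityMatrix {dA : ℕ} (σ : Matrix (Fin dA) (Fin dA) ℂ) : Prop :=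
  σ.PosSemidef ∧ σ.trace = 1

/-- `P` is a Naimark extension of the POVM `M` with ancilla state `σ`. -/
def IsNaimarkExtension {d dA : ℕ} {J : Type} [Fintype J]
    (M : J → Matrix (Fin d) (Fin d) ℂ) (σ : Matrix (Fin dA) (Fin dA) ℂ)
    (P : J → Matrix (Fin d × Fin dA) (Fin d × Fin dA) ℂ) : Prop :=
  IsPVM P ∧ ∀ (ρ : Matrix (Fin d) (Fin d) ℂ) (j : J),
    (ρ * M j).trace = ((ρ ⊗ₖ σ) * P j).trace

/-- The POVMs `M i` are jointly measurable (compatible). -/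
def JointlyMeasurable {d N : ℕ} {n : Fin N → ℕ}
    (M : ∀ i, Fin (n i) → Matrix (Fin d) (Fin d) ℂ) : Prop :=
  ∃ G : (∀ k, Fin (n k)) → Matrix (Fin d) (Fin d) ℂ,
    IsPOVM G ∧ ∀ (i : Fin N) (a : Fin (n i)),
      ∑ j ∈ Finset.univ.filter (fun j : ∀ k, Fin (n k) => j i = a), G j = M i a

open scoped MatrixOrder in

lemma naimark_core {d : ℕ} {J : Type} [Fintype J] [DecidableEq J] [Nonempty J]
    (G : J → Matrix (Fin d) (Fin d) ℂ)
    (hGpsd : ∀ j, (G j).PosSemidef) (hGsum : ∑ j, G j = 1) :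
    ∃ (dA : ℕ) (σ : Matrix (Fin dA) (Fin dA) ℂ),
      (σ.PosSemidef ∧ σ.trace = 1) ∧
      ∃ Q : J → Matrix (Fin d × Fin dA) (Fin d × Fin dA) ℂ,
        (∀ j, (Q j).IsHermitian) ∧
        (∀ j j', Q j * Q j' = if j = j' then Q j else 0) ∧
        (∑ j, Q j = 1) ∧
        (∀ (ρ : Matrix (Fin d) (Fin d) ℂ) (j : J),
          (ρ * G j).trace = ((ρ ⊗ₖ σ) * Q j).trace) := by
  classical
  set m := Fintype.card J with hm
  have hmpos : 0 < m := Fintype.card_pos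
  set e : Fin m ≃ J := (Fintype.equivFin J).symm with he
  set c : Fin m := ⟨0, hmpos⟩ with hc
  set S : J → Matrix (Fin d) (Fin d) ℂ := fun j => CFC.sqrt (G j) with hS
  have hSherm : ∀ j, (S j).IsHermitian := fun j => (CFC.sqrt_nonneg (G j)).posSemidef.1
  have hSS : ∀ j, S j * S j = G j := fun j => CFC.sqrt_mul_sqrt_self (G j) (hGpsd j).nonneg
  have hstar : ∀ j x z, (starRingEnd ℂ) (S j x z) = S j z x := by
    intro j x z
    calc (starRingEnd ℂ) (S j x z) = (S j)ᴴ z x := (conjTranspose_apply _ _ _).symm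
    _ = S j z x := by rw [hSherm j]
  have hGentry : ∀ (j : J) (x y : Fin d),
      ∑ z, (starRingEnd ℂ) (S j x z) * S j y z = G j y x := by
    intro j x y
    calc ∑ z, (starRingEnd ℂ) (S j x z) * S j y z
        = ∑ z, S j y z * S j z x := by
          refine Finset.sum_congr rfl fun z _ => ?_
          rw [hstar, mul_comm]
      _ = (S j * S j) y x := (Matrix.mul_apply).symm
      _ = G j y x := by rw [hSS]
  -- the orthonormal family
  set u : Fin d → EuclideanSpace ℂ (Fin d × Fin m) :=
    fun y => WithLp.toLp 2 (fun p => S (e p.2) y p.1 : Fin d × Fin m → ℂ) with hu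
  have hu_apply : ∀ y p, u y p = S (e p.2) y p.1 := fun y p => rfl
  have huinner : ∀ x y : Fin d,
      (inner ℂ (u x) (u y) : ℂ) = if x = y then (1:ℂ) else 0 := by
    intro x y
    calc (inner ℂ (u x) (u y) : ℂ)
        = ∑ p : Fin d × Fin m, (starRingEnd ℂ) (u x p) * u y p := by
          rw [PiLp.inner_apply]; exact Finset.sum_congr rfl fun p _ => RCLike.inner_apply' _ _
      _ = ∑ a : Fin m, ∑ z : Fin d, (starRingEnd ℂ) (S (e a) x z) * S (e a) y z := by
          rw [Fintype.sum_prod_type_right]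
      _ = ∑ a : Fin m, G (e a) y x := by
          exact Finset.sum_congr rfl fun a _ => hGentry (e a) x y
      _ = ∑ j : J, G j y x := Fintype.sum_equiv e _ _ fun a => rfl
      _ = (1 : Matrix (Fin d) (Fin d) ℂ) y x := by
          rw [← hGsum]; simp [Matrix.sum_apply]
      _ = if x = y then (1:ℂ) else 0 := by
          rw [Matrix.one_apply]; simp [eq_comm]
  -- extend to an orthonormal basis
  have hcard : Module.finrank ℂ (EuclideanSpace ℂ (Fin d × Fin m))
      = Fintype.card (Fin d × Fin m) := finrank_euclideanSpace
  set s : Set (Fin d × Fin m) := {p | p.2 = c} with hs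
  set v : Fin d × Fin m → EuclideanSpace ℂ (Fin d × Fin m) := fun p => u p.1 with hv
  have hortho : Orthonormal ℂ (s.restrict v) := by
    rw [orthonormal_iff_ite]
    rintro ⟨p, hp⟩ ⟨q, hq⟩
    simp only [Set.restrict_apply, hv]
    rw [show s.restrict (fun p => u p.1) ⟨p, hp⟩ = u p.1 from rfl,
      show s.restrict (fun p => u p.1) ⟨q, hq⟩ = u q.1 from rfl, huinner]
    congr 1
    simp only [eq_iff_iff, Subtype.mk_eq_mk]
    constructor
    · intro h; exact Prod.ext h (hp.trans hq.symm)
    · intro h; exact congrArg Prod.fst h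
  obtain ⟨b, hb⟩ := hortho.exists_orthonormalBasis_extension_of_card_eq hcard
  -- the unitary
  set U : Matrix (Fin d × Fin m) (Fin d × Fin m) ℂ :=
    Matrix.of (fun p q => b p q) with hU
  have hUapply : ∀ p q, U p q = b p q := fun p q => rfl
  have hUU : U * Uᴴ = 1 := by
    ext p q
    rw [Matrix.mul_apply, Matrix.one_apply]
    have hb2 := orthonormal_iff_ite.mp b.orthonormal q p
    rw [PiLp.inner_apply] at hb2
    calc ∑ r, U p r * Uᴴ r q
        = ∑ r, (starRingEnd ℂ) (b q r) * b p r := by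
          refine Finset.sum_congr rfl fun r _ => ?_
          rw [conjTranspose_apply, hUapply, hUapply, mul_comm]; rfl
      _ = if q = p then 1 else 0 := by rw [← hb2]; exact Finset.sum_congr rfl fun r _ => (RCLike.inner_apply' _ _).symm
      _ = if p = q then 1 else 0 := by simp [eq_comm]
  have hU2 : Uᴴ * U = 1 := mul_eq_one_comm.mp hUU
  have hUent : ∀ (y z : Fin d) (k : Fin m), U (y, c) (z, k) = S (e k) y z := by
    intro y z k
    have h1 : b (y, c) = v (y, c) := hb (y, c) rfl
    have := congrArg (fun f : EuclideanSpace ℂ (Fin d × Fin m) => f (z, k)) h1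
    simpa [hUapply, hv, hu_apply] using this
  -- the diagonal projections
  set D : Fin m → Matrix (Fin d × Fin m) (Fin d × Fin m) ℂ :=
    fun k => Matrix.diagonal (fun p => if p.2 = k then (1:ℂ) else 0) with hD
  have hDH : ∀ k, (D k)ᴴ = D k := by
    intro k
    have hst : (star fun p : Fin d × Fin m => if p.2 = k then (1:ℂ) else 0)
        = fun p : Fin d × Fin m => if p.2 = k then (1:ℂ) else 0 := by
      funext p
      by_cases h : p.2 = k <;> simp [h]
    rw [hD, diagonal_conjTranspose, hst]
  have hDD : ∀ k k', D k * D k' = if k = k' then D k else 0 := by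
    intro k k'
    rw [hD, diagonal_mul_diagonal]
    by_cases h : k = k'
    · subst h
      rw [if_pos rfl]
      ext p q
      by_cases hpq : p = q
      · subst hpq
        by_cases h2 : p.2 = k <;> simp [Matrix.diagonal_apply, h2]
      · simp [Matrix.diagonal_apply, hpq]
    · rw [if_neg h]
      ext p q
      by_cases hpq : p = q
      · subst hpq
        by_cases h2 : p.2 = k <;> by_cases h3 : p.2 = k' <;>
          simp_all [Matrix.diagonal_apply]
      · simp [Matrix.diagonal_apply, hpq]
  have hDsum : ∑ k, D k = 1 := by
    ext p q
    simp only [Finset.sum_apply, hD, Matrix.diagonal_apply, Matrix.one_apply,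
      Matrix.sum_apply]
    by_cases h : p = q
    · subst h; simp
    · simp [h]
  -- the PVM
  set Q : J → Matrix (Fin d × Fin m) (Fin d × Fin m) ℂ :=
    fun j => U * D (e.symm j) * Uᴴ with hQ
  have hQherm : ∀ j, (Q j).IsHermitian := by
    intro j
    show (U * D (e.symm j) * Uᴴ)ᴴ = U * D (e.symm j) * Uᴴ
    rw [conjTranspose_mul, conjTranspose_mul, conjTranspose_conjTranspose,
      hDH, Matrix.mul_assoc]
  have hQmul : ∀ j j', Q j * Q j' = if j = j' then Q j else 0 := by
    intro j j'
    show U * D (e.symm j) * Uᴴ * (U * D (e.symm j') * Uᴴ)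
      = if j = j' then U * D (e.symm j) * Uᴴ else 0
    simp only [Matrix.mul_assoc]
    rw [← Matrix.mul_assoc Uᴴ U, hU2, Matrix.one_mul,
      ← Matrix.mul_assoc (D (e.symm j)), hDD]
    by_cases h : j = j'
    · rw [if_pos h, if_pos (by rw [h])]
    · rw [if_neg h, if_neg (fun hh => h (e.symm.injective hh)),
        Matrix.zero_mul, Matrix.mul_zero]
  have hQsum : ∑ j, Q j = 1 := by
    have : ∑ j, Q j = U * (∑ j, D (e.symm j)) * Uᴴ := by
      rw [Finset.mul_sum, Finset.sum_mul]
    rw [this]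
    have : ∑ j, D (e.symm j) = ∑ k, D k := Fintype.sum_equiv e.symm _ _ fun j => rfl
    rw [this, hDsum, Matrix.mul_one, hUU]
  -- the ancilla state
  set σ : Matrix (Fin m) (Fin m) ℂ :=
    Matrix.of (fun a b => if a = c ∧ b = c then (1:ℂ) else 0) with hσ
  have hσapply : ∀ a b, σ a b = if a = c ∧ b = c then (1:ℂ) else 0 := fun a b => rfl
  have hσpsd : σ.PosSemidef := by
    rw [posSemidef_iff_dotProduct_mulVec]
    constructor
    · ext a b
      rw [conjTranspose_apply, hσapply, hσapply]
      by_cases h1 : a = c <;> by_cases h2 : b = c <;> simp [h1, h2, and_comm]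
    · intro x
      have hmv : σ *ᵥ x = fun a => if a = c then x c else 0 := by
        funext a
        simp only [Matrix.mulVec, dotProduct, hσapply]
        by_cases h : a = c
        · simp [h]
        · simp [h]
      rw [hmv]
      have : dotProduct (star x) (fun a => if a = c then x c else 0)
          = star (x c) * x c := by
        simp [dotProduct, Pi.star_apply, mul_ite, Finset.sum_ite_eq']
      rw [this]
      exact star_mul_self_nonneg (x c)
  have hσtr : σ.trace = 1 := by
    simp only [Matrix.trace, Matrix.diag, hσapply]
    simp [Finset.sum_ite_eq']
  -- the block formula
  have hQblock : ∀ (j : J) (x y : Fin d), Q j (y, c) (x, c) = G j y x := by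
    intro j x y
    have h1 : Q j (y, c) (x, c)
        = ∑ r : Fin d × Fin m, U (y, c) r * (if r.2 = e.symm j then (1:ℂ) else 0)
            * (starRingEnd ℂ) (U (x, c) r) := by
      rw [hQ]
      show (U * D (e.symm j) * Uᴴ) (y, c) (x, c) = _
      rw [Matrix.mul_apply]
      refine Finset.sum_congr rfl fun r _ => ?_
      rw [Matrix.mul_diagonal, conjTranspose_apply]
      rfl
    rw [h1, Fintype.sum_prod_type_right]
    have h2 : ∀ a : Fin m, ∑ z : Fin d, U (y, c) (z, a) * (if a = e.symm j then (1:ℂ) else 0)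
        * (starRingEnd ℂ) (U (x, c) (z, a))
        = if a = e.symm j then ∑ z, U (y, c) (z, a) * (starRingEnd ℂ) (U (x, c) (z, a)) else 0 := by
      intro a
      by_cases h : a = e.symm j
      · simp [h]
      · simp [h]
    calc ∑ a, ∑ z, U (y, c) (z, a) * (if a = e.symm j then (1:ℂ) else 0)
          * (starRingEnd ℂ) (U (x, c) (z, a))
        = ∑ a, if a = e.symm j then
            ∑ z, U (y, c) (z, a) * (starRingEnd ℂ) (U (x, c) (z, a)) else 0 :=
          Finset.sum_congr rfl fun a _ => h2 a
      _ = ∑ z, U (y, c) (z, e.symm j) * (starRingEnd ℂ) (U (x, c) (z, e.symm j)) :=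
          Fintype.sum_ite_eq' _ _
      _ = ∑ z, (starRingEnd ℂ) (S j x z) * S j y z := by
          refine Finset.sum_congr rfl fun z _ => ?_
          rw [hUent, hUent, Equiv.apply_symm_apply, mul_comm]
      _ = G j y x := hGentry j x y
  -- the trace identity
  have htr : ∀ (ρ : Matrix (Fin d) (Fin d) ℂ) (j : J),
      (ρ * G j).trace = ((ρ ⊗ₖ σ) * Q j).trace := by
    intro ρ j
    have hlhs : (ρ * G j).trace = ∑ x, ∑ y, ρ x y * G j y x := by
      simp [Matrix.trace, Matrix.diag, Matrix.mul_apply]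
    have hrhs : ((ρ ⊗ₖ σ) * Q j).trace
        = ∑ p : Fin d × Fin m, ∑ q : Fin d × Fin m,
            ρ p.1 q.1 * σ p.2 q.2 * Q j q p := by
      simp [Matrix.trace, Matrix.diag, Matrix.mul_apply, Matrix.kroneckerMap_apply]
    rw [hlhs, hrhs, Fintype.sum_prod_type]
    refine Eq.symm ?_
    have : ∀ (x : Fin d) (a : Fin m), ∑ q : Fin d × Fin m,
        ρ x q.1 * σ a q.2 * Q j q (x, a)
        = if a = c then ∑ y, ρ x y * Q j (y, c) (x, a) else 0 := by
      intro x a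
      rw [Fintype.sum_prod_type]
      by_cases h : a = c
      · rw [if_pos h]
        refine Finset.sum_congr rfl fun y _ => ?_
        calc ∑ b, ρ x y * σ a b * Q j (y, b) (x, a)
            = ∑ b, if b = c then ρ x y * Q j (y, c) (x, a) else 0 := by
              refine Finset.sum_congr rfl fun b _ => ?_
              by_cases hb : b = c
              · rw [if_pos hb, hσapply, if_pos ⟨h, hb⟩, hb, mul_one]
              · rw [if_neg hb, hσapply, if_neg (fun hh => hb hh.2), mul_zero,
                  zero_mul]
          _ = ρ x y * Q j (y, c) (x, a) := Fintype.sum_ite_eq' _ _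
      · rw [if_neg h]
        refine Finset.sum_eq_zero fun y _ => Finset.sum_eq_zero fun b _ => ?_
        rw [hσapply, if_neg (fun hh => h hh.1), mul_zero, zero_mul]
    calc ∑ x, ∑ a, ∑ q : Fin d × Fin m, ρ x q.1 * σ a q.2 * Q j q (x, a)
        = ∑ x, ∑ a, if a = c then ∑ y, ρ x y * Q j (y, c) (x, a) else 0 :=
          Finset.sum_congr rfl fun x _ => Finset.sum_congr rfl fun a _ => this x a
      _ = ∑ x, ∑ y, ρ x y * Q j (y, c) (x, c) := by
          refine Finset.sum_congr rfl fun x _ => ?_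
          exact Fintype.sum_ite_eq' _ _
      _ = ∑ x, ∑ y, ρ x y * G j y x := by
          refine Finset.sum_congr rfl fun x _ => Finset.sum_congr rfl fun y _ => ?_
          rw [hQblock]
  exact ⟨m, σ, ⟨hσpsd, hσtr⟩, Q, hQherm, hQmul, hQsum, htr⟩

set_option maxHeartbeats 1000000 in
/-- If POVMs `M 1, …, M N` are jointly measurable, then there exist an ancilla dimension, a
single ancilla density matrix, and pairwise commuting PVMs on the extended space such that
each `P i` is a Naimark extension of `M i` with the same ancilla state. -/
theorem jointly_measurable_implies_commuting_Naimark_extensions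
    {d N : ℕ} {n : Fin N → ℕ}
    (M : ∀ i, Fin (n i) → Matrix (Fin d) (Fin d) ℂ)
    (hM : ∀ i, IsPOVM (M i))
    (hJM : JointlyMeasurable M) :
    ∃ (dA : ℕ) (σ : Matrix (Fin dA) (Fin dA) ℂ), IsDensityMatrix σ ∧
      ∃ P : ∀ i, Fin (n i) → Matrix (Fin d × Fin dA) (Fin d × Fin dA) ℂ,
        (∀ (i l : Fin N) (a : Fin (n i)) (b : Fin (n l)),
          P i a * P l b = P l b * P i a) ∧
        ∀ i, IsNaimarkExtension (M i) σ (P i) := by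
  classical
  obtain ⟨G, hG, hGM⟩ := hJM
  by_cases hd : d = 0
  · -- degenerate case: `d = 0`, everything is trivial
    subst hd
    refine ⟨1, 1, ⟨Matrix.PosSemidef.one, by simp [Matrix.trace_one]⟩,
      fun i a => 0, fun i l a b => by simp, fun i => ?_⟩
    refine ⟨⟨⟨fun a => Matrix.PosSemidef.zero, ?_⟩,
      fun a => ⟨Matrix.isHermitian_zero, by rw [Matrix.mul_zero]⟩⟩, fun ρ a => ?_⟩
    · ext p q
      exact p.1.elim0
    · have h1 : (ρ * M i a).trace = 0 := by
        simp [Matrix.trace]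
      have h2 : ((ρ ⊗ₖ (1 : Matrix (Fin 1) (Fin 1) ℂ)) * 0).trace = 0 := by
        rw [Matrix.mul_zero, Matrix.trace_zero]
      rw [h1, h2]
  · -- main case
    have hne : ∀ k, 0 < n k := by
      intro k
      by_contra hk
      have hk0 : n k = 0 := Nat.eq_zero_of_not_pos hk
      have hIE : IsEmpty (Fin (n k)) := by rw [hk0]; infer_instance
      have h1 : (1 : Matrix (Fin d) (Fin d) ℂ) = 0 := by
        rw [← (hM k).2, Finset.univ_eq_empty, Finset.sum_empty]
      have : (1 : Matrix (Fin d) (Fin d) ℂ) ⟨0, Nat.pos_of_ne_zero hd⟩ ⟨0, Nat.pos_of_ne_zero hd⟩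
          = 0 := by rw [h1]; rfl
      rw [Matrix.one_apply_eq] at this
      exact one_ne_zero this
    haveI hNE : Nonempty (∀ k, Fin (n k)) := ⟨fun k => ⟨0, hne k⟩⟩
    obtain ⟨dA, σ, hσ, Q, hQH, hQmul, hQsum, hQtr⟩ := naimark_core G hG.1 hG.2
    have hQpsd : ∀ j, (Q j).PosSemidef := by
      intro j
      have h1 : Q j * Q j = Q j := by simpa using hQmul j j
      have h2 : (Q j)ᴴ * Q j = Q j := by rw [(hQH j).eq, h1]
      exact h2 ▸ Matrix.posSemidef_conjTranspose_mul_self (Q j)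
    have hPmul : ∀ (A B : Finset (∀ k, Fin (n k))),
        (∑ j ∈ A, Q j) * (∑ j ∈ B, Q j) = ∑ j ∈ A ∩ B, Q j := by
      intro A B
      rw [Finset.sum_mul_sum]
      calc ∑ j ∈ A, ∑ j' ∈ B, Q j * Q j'
          = ∑ j ∈ A, if j ∈ B then Q j else 0 := by
            refine Finset.sum_congr rfl fun j _ => ?_
            simp only [hQmul]
            exact Finset.sum_ite_eq B j fun _ => Q j
        _ = ∑ j ∈ A ∩ B, Q j := Finset.sum_ite_mem A B fun j => Q j
    refine ⟨dA, σ, hσ,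
      fun i a => ∑ j ∈ Finset.univ.filter (fun j => j i = a), Q j,
      fun i l a b => by rw [hPmul, hPmul, Finset.inter_comm], fun i => ?_⟩
    refine ⟨⟨⟨fun a => ?_, ?_⟩, fun a => ⟨?_, ?_⟩⟩, fun ρ a => ?_⟩
    · -- positive semidefinite
      exact Finset.sum_induction Q _ (fun _ _ h1 h2 => h1.add h2)
        Matrix.PosSemidef.zero fun j _ => hQpsd j
    · -- sums to the identity
      exact (Finset.sum_fiberwise Finset.univ (fun j => j i) Q).trans hQsum
    · -- Hermitian
      show (∑ j ∈ Finset.univ.filter (fun j => j i = a), Q j)ᴴ = _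
      rw [Matrix.conjTranspose_sum]
      exact Finset.sum_congr rfl fun j _ => (hQH j).eq
    · -- idempotent
      rw [hPmul, Finset.inter_self]
    · -- the trace identity
      rw [← hGM i a, Finset.mul_sum, Matrix.trace_sum, Finset.mul_sum, Matrix.trace_sum]
      exact Finset.sum_congr rfl fun j _ => hQtr ρ j
end

section
/- Let M_1, …, M_N be POVMs on ℂ^d, where M_i has outcome set Fin n_i. Suppose there exist an ancilla dimension d_A, a single density matrix σ on ℂ^{d_A}, and PVMs P_1, …, P_N on ℂ^d ⊗ ℂ^{d_A} that pairwise commute (P_i(a) * P_l(b) = P_l(b) * P_i(a) for all i, l, a, b), with each P_i a Naimark extension of M_i with the same ancilla state σ. Then M_1, …, M_N are jointly measurable. -/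
open Matrix ComplexOrder Kronecker

section NaimarkAux

variable {d dA : ℕ}

/-- Partial trace against an ancilla state `σ`. -/
noncomputable def ptr (σ : Matrix (Fin dA) (Fin dA) ℂ)
    (X : Matrix (Fin d × Fin dA) (Fin d × Fin dA) ℂ) : Matrix (Fin d) (Fin d) ℂ :=
  Matrix.of fun l k => ∑ m, ∑ m', σ m m' * X (l, m') (k, m)

lemma trace_mul_ptr (σ : Matrix (Fin dA) (Fin dA) ℂ)
    (ρ : Matrix (Fin d) (Fin d) ℂ) (X : Matrix (Fin d × Fin dA) (Fin d × Fin dA) ℂ) :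
    (ρ * ptr σ X).trace = ((ρ ⊗ₖ σ) * X).trace := by
  simp only [ptr, Matrix.trace, Matrix.diag, Matrix.mul_apply, Matrix.of_apply,
    Fintype.sum_prod_type, Matrix.kroneckerMap_apply, Finset.mul_sum]
  refine Finset.sum_congr rfl fun k _ => ?_
  rw [Finset.sum_comm]
  exact Finset.sum_congr rfl fun m _ => Finset.sum_congr rfl fun l _ =>
    Finset.sum_congr rfl fun m' _ => by ring

lemma ptr_sum (σ : Matrix (Fin dA) (Fin dA) ℂ) {α : Type*} (t : Finset α)
    (X : α → Matrix (Fin d × Fin dA) (Fin d × Fin dA) ℂ) :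
    ptr σ (∑ j ∈ t, X j) = ∑ j ∈ t, ptr σ (X j) := by
  classical
  induction t using Finset.induction_on with
  | empty => ext l k; simp [ptr]
  | insert _ _ h ih =>
    rw [Finset.sum_insert h, Finset.sum_insert h, ← ih]
    ext l k
    simp [ptr, mul_add, Finset.sum_add_distrib]

lemma ptr_one (σ : Matrix (Fin dA) (Fin dA) ℂ) (hσ : σ.trace = 1) :
    ptr σ (1 : Matrix (Fin d × Fin dA) (Fin d × Fin dA) ℂ) = 1 := by
  ext l k
  simp only [ptr, Matrix.of_apply, Matrix.one_apply, Prod.mk.injEq, mul_ite, mul_one, mul_zero]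
  by_cases h : l = k
  · subst h
    simpa [Finset.sum_ite_eq', Matrix.trace, Matrix.diag] using hσ
  · simp only [h, false_and, if_false, Finset.sum_const_zero]

lemma ptr_posSemidef (σ : Matrix (Fin dA) (Fin dA) ℂ) (hσ : σ.PosSemidef)
    (X : Matrix (Fin d × Fin dA) (Fin d × Fin dA) ℂ) (hX : X.PosSemidef) :
    (ptr σ X).PosSemidef := by
  refine Matrix.PosSemidef.of_dotProduct_mulVec_nonneg ?_ ?_
  · ext k l
    simp only [Matrix.conjTranspose_apply, ptr, Matrix.of_apply, star_sum, star_mul']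
    rw [Finset.sum_comm]
    refine Finset.sum_congr rfl fun m _ => Finset.sum_congr rfl fun m' _ => ?_
    rw [hσ.1.apply, hX.1.apply]
  · intro x
    obtain ⟨B, hB⟩ : ∃ B : Matrix (Fin dA) (Fin dA) ℂ, σ = Bᴴ * B := by
      open scoped MatrixOrder in exact CStarAlgebra.nonneg_iff_eq_star_mul_self.mp hσ.nonneg
    have key : (star x ⬝ᵥ (ptr σ X) *ᵥ x) =
        ∑ t, star (fun p : Fin d × Fin dA => x p.1 * star (B t p.2)) ⬝ᵥ
          X *ᵥ (fun p : Fin d × Fin dA => x p.1 * star (B t p.2)) := by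
      simp only [ptr, hB, dotProduct, Matrix.mulVec, Matrix.of_apply, Matrix.mul_apply,
        Matrix.conjTranspose_apply, Pi.star_apply, Fintype.sum_prod_type,
        Finset.mul_sum, Finset.sum_mul, star_mul', star_star]
      conv_lhs => enter [2, l, 2, k, 2, m]; rw [Finset.sum_comm]
      conv_lhs => enter [2, l, 2, k]; rw [Finset.sum_comm]
      conv_lhs => enter [2, l]; rw [Finset.sum_comm]
      conv_lhs => rw [Finset.sum_comm]
      conv_lhs => enter [2, t, 2, l, 2, k]; rw [Finset.sum_comm]
      conv_lhs => enter [2, t, 2, l]; rw [Finset.sum_comm]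
      exact Finset.sum_congr rfl fun t _ => Finset.sum_congr rfl fun l _ =>
        Finset.sum_congr rfl fun m' _ => Finset.sum_congr rfl fun k _ =>
          Finset.sum_congr rfl fun m _ => by ring
    rw [key]
    exact Finset.sum_nonneg fun t _ => hX.dotProduct_mulVec_nonneg _

/-- Matrices with equal trace pairings against all `ρ` are equal. -/
lemma eq_of_trace_mul_eq {A B : Matrix (Fin d) (Fin d) ℂ}
    (h : ∀ ρ : Matrix (Fin d) (Fin d) ℂ, (ρ * A).trace = (ρ * B).trace) : A = B := by
  ext k l
  have := h (Matrix.single l k 1)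
  simpa [Matrix.trace, Matrix.diag, Matrix.mul_apply, Matrix.single,
    Finset.sum_ite_eq, ite_and, Finset.sum_ite_eq'] using this

end NaimarkAux

section Qs

variable {d N dA : ℕ} {n : Fin N → ℕ}
variable (P : ∀ i, Fin (n i) → Matrix (Fin d × Fin dA) (Fin d × Fin dA) ℂ)
variable (hcomm : ∀ (i l : Fin N) (a : Fin (n i)) (b : Fin (n l)),
      P i a * P l b = P l b * P i a)

/-- Ordered product of the commuting projections selected by `j` over the coordinates in `s`. -/
def Qs (s : Finset (Fin N)) (j : ∀ k, Fin (n k)) :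
    Matrix (Fin d × Fin dA) (Fin d × Fin dA) ℂ :=
  s.noncommProd (fun l => P l (j l)) (fun x _ y _ _ => hcomm x y (j x) (j y))

lemma Qs_commute (s : Finset (Fin N)) (j : ∀ k, Fin (n k)) (i : Fin N) (a : Fin (n i)) :
    Commute (P i a) (Qs P hcomm s j) :=
  Finset.noncommProd_commute _ _ _ _ fun x _ => hcomm i x a (j x)

lemma Qs_insert {s : Finset (Fin N)} {i : Fin N} (hi : i ∉ s) (j : ∀ k, Fin (n k)) :
    Qs P hcomm (insert i s) j = P i (j i) * Qs P hcomm s j :=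
  Finset.noncommProd_insert_of_notMem _ _ _ _ hi

lemma Qs_herm_idem (hP : ∀ i, IsPVM (P i)) (s : Finset (Fin N)) (j : ∀ k, Fin (n k)) :
    (Qs P hcomm s j).IsHermitian ∧
      Qs P hcomm s j * Qs P hcomm s j = Qs P hcomm s j := by
  classical
  induction s using Finset.induction_on with
  | empty =>
    constructor
    · exact Matrix.isHermitian_one
    · exact (mul_one (1 : Matrix (Fin d × Fin dA) (Fin d × Fin dA) ℂ))
  | @insert i s hi ih =>
    have hc := Qs_commute P hcomm s j i (j i)
    rw [Qs_insert P hcomm hi]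
    constructor
    · rw [Matrix.IsHermitian, Matrix.conjTranspose_mul, ih.1, ((hP i).2 (j i)).1, hc.eq]
    · calc P i (j i) * Qs P hcomm s j * (P i (j i) * Qs P hcomm s j)
          = P i (j i) * (Qs P hcomm s j * P i (j i)) * Qs P hcomm s j := by
            simp [mul_assoc]
        _ = P i (j i) * P i (j i) * (Qs P hcomm s j * Qs P hcomm s j) := by
            rw [← hc.eq]; simp [mul_assoc]
        _ = P i (j i) * Qs P hcomm s j := by rw [((hP i).2 (j i)).2, ih.2]

lemma Qs_posSemidef (hP : ∀ i, IsPVM (P i)) (s : Finset (Fin N)) (j : ∀ k, Fin (n k)) :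
    (Qs P hcomm s j).PosSemidef := by
  obtain ⟨h1, h2⟩ := Qs_herm_idem P hcomm hP s j
  have : Qs P hcomm s j = (Qs P hcomm s j)ᴴ * Qs P hcomm s j := by
    rw [h1]; exact h2.symm
  rw [this]
  exact Matrix.posSemidef_conjTranspose_mul_self _

/-- The key summation identity for products of commuting projective measurements. -/
lemma Qs_sum (hP : ∀ i, IsPVM (P i)) (s : Finset (Fin N)) (j₀ : ∀ k, Fin (n k)) :
    ∑ j ∈ Finset.univ.filter (fun j : ∀ k, Fin (n k) => ∀ k ∉ s, j k = j₀ k),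
      Qs P hcomm s j = 1 := by
  classical
  induction s using Finset.induction_on generalizing j₀ with
  | empty =>
    have hfil : Finset.univ.filter
        (fun j : ∀ k, Fin (n k) => ∀ k ∉ (∅ : Finset (Fin N)), j k = j₀ k) = {j₀} := by
      ext j
      simp [funext_iff]
    rw [hfil, Finset.sum_singleton]
    exact Finset.noncommProd_empty _ _
  | @insert i s hi ih =>
    rw [← Finset.sum_fiberwise _ (fun j : ∀ k, Fin (n k) => j i)
      (fun j => Qs P hcomm (insert i s) j)]
    have key : ∀ a : Fin (n i),
        ∑ j ∈ (Finset.univ.filter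
            (fun j : ∀ k, Fin (n k) => ∀ k ∉ insert i s, j k = j₀ k)).filter
            (fun j => j i = a),
          Qs P hcomm (insert i s) j = P i a := by
      intro a
      have hfil : (Finset.univ.filter
            (fun j : ∀ k, Fin (n k) => ∀ k ∉ insert i s, j k = j₀ k)).filter
            (fun j => j i = a)
          = Finset.univ.filter
            (fun j : ∀ k, Fin (n k) => ∀ k ∉ s, j k = Function.update j₀ i a k) := by
        ext j
        simp only [Finset.mem_filter, Finset.mem_univ, true_and, Finset.mem_insert]
        constructor
        · rintro ⟨h1, h2⟩ k hk
          by_cases hki : k = i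
          · subst hki; simpa [Function.update] using h2
          · rw [Function.update_of_ne hki]
            exact h1 k (by simp [hki, hk])
        · intro h
          constructor
          · intro k hk
            rcases not_or.mp (by simpa using hk) with ⟨hki, hks⟩
            rw [h k hks, Function.update_of_ne hki]
          · simpa using h i hi
      rw [hfil]
      have step : ∀ j ∈ Finset.univ.filter
          (fun j : ∀ k, Fin (n k) => ∀ k ∉ s, j k = Function.update j₀ i a k),
          Qs P hcomm (insert i s) j = P i a * Qs P hcomm s j := by
        intro j hj
        rw [Qs_insert P hcomm hi]
        congr 1
        have := (Finset.mem_filter.mp hj).2 i hi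
        rw [this, Function.update_self]
      rw [Finset.sum_congr rfl step, ← Finset.mul_sum, ih (Function.update j₀ i a), mul_one]
    rw [Finset.sum_congr rfl fun a _ => key a]
    exact (hP i).1.2

end Qs

/-- If POVMs `M 1, …, M N` admit pairwise commuting Naimark extensions using one and the same
ancilla state on the same ancilla Hilbert space, then they are jointly measurable. -/
theorem commuting_Naimark_extensions_implies_jointly_measurable
    {d N dA : ℕ} {n : Fin N → ℕ}
    (M : ∀ i, Fin (n i) → Matrix (Fin d) (Fin d) ℂ)
    (hM : ∀ i, IsPOVM (M i))
    (σ : Matrix (Fin dA) (Fin dA) ℂ) (hσ : IsDensityMatrix σ)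
    (P : ∀ i, Fin (n i) → Matrix (Fin d × Fin dA) (Fin d × Fin dA) ℂ)
    (hcomm : ∀ (i l : Fin N) (a : Fin (n i)) (b : Fin (n l)),
      P i a * P l b = P l b * P i a)
    (hNaimark : ∀ i, IsNaimarkExtension (M i) σ (P i)) :
    JointlyMeasurable M := by
  classical
  by_cases hne : Nonempty (∀ k, Fin (n k))
  · obtain ⟨j₀⟩ := hne
    have hP : ∀ i, IsPVM (P i) := fun i => (hNaimark i).1
    refine ⟨fun j => ptr σ (Qs P hcomm Finset.univ j),
      ⟨fun j => ptr_posSemidef σ hσ.1 _ (Qs_posSemidef P hcomm hP _ j), ?_⟩, ?_⟩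
    · rw [← ptr_sum]
      have huniv : (Finset.univ : Finset (∀ k, Fin (n k))) =
          Finset.univ.filter
            (fun j : ∀ k, Fin (n k) => ∀ k ∉ (Finset.univ : Finset (Fin N)), j k = j₀ k) := by
        ext j; simp
      rw [huniv, Qs_sum P hcomm hP Finset.univ j₀, ptr_one σ hσ.2]
    · intro i a
      have hsum : ∑ j ∈ Finset.univ.filter (fun j : ∀ k, Fin (n k) => j i = a),
          Qs P hcomm Finset.univ j = P i a := by
        have hstep : ∀ j ∈ Finset.univ.filter (fun j : ∀ k, Fin (n k) => j i = a),
            Qs P hcomm Finset.univ j = P i a * Qs P hcomm (Finset.univ.erase i) j := by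
          intro j hj
          have hji : j i = a := (Finset.mem_filter.mp hj).2
          have h2 := Finset.mul_noncommProd_erase Finset.univ (Finset.mem_univ i)
            (fun l => P l (j l)) (fun x _ y _ _ => hcomm x y (j x) (j y))
          rw [← hji]
          exact h2.symm
        rw [Finset.sum_congr rfl hstep, ← Finset.mul_sum]
        have hfil : Finset.univ.filter (fun j : ∀ k, Fin (n k) => j i = a) =
            Finset.univ.filter (fun j : ∀ k, Fin (n k) => ∀ k ∉ Finset.univ.erase i,
              j k = Function.update j₀ i a k) := by
          ext j
          simp only [Finset.mem_filter, Finset.mem_univ, true_and]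
          constructor
          · intro h k hk
            have hki : k = i := by
              by_contra hki
              exact hk (Finset.mem_erase.mpr ⟨hki, Finset.mem_univ k⟩)
            subst hki
            simpa [Function.update] using h
          · intro h
            have := h i (by simp)
            simpa [Function.update] using this
        rw [hfil, Qs_sum P hcomm hP _ _, mul_one]
      rw [← ptr_sum, hsum]
      refine eq_of_trace_mul_eq fun ρ => ?_
      rw [trace_mul_ptr, ← (hNaimark i).2 ρ a]
  · obtain ⟨k, hk⟩ : ∃ k, ¬ Nonempty (Fin (n k)) := by
      by_contra h
      push_neg at h
      exact hne ⟨fun k => Classical.arbitrary _⟩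
    haveI : IsEmpty (Fin (n k)) := not_nonempty_iff.mp hk
    have h01 : (0 : Matrix (Fin d) (Fin d) ℂ) = 1 := by simpa using (hM k).2
    have hsub : Subsingleton (Matrix (Fin d) (Fin d) ℂ) := subsingleton_of_zero_eq_one h01
    exact ⟨fun _ => 0, ⟨fun _ => Matrix.PosSemidef.zero, hsub.elim _ _⟩,
      fun i a => hsub.elim _ _⟩
end
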